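/- Let V and W be e-dimensional linear subspaces of ℝ^n with orthonormal bases v_1,…,v_e and w_1,…,w_e respectively. Extend the inner product to ⋀^e ℝ^n by ⟨v_1∧…∧v_e, w_1∧…∧w_e⟩ = det(⟨v_i, w_j⟩). If ‖π_V − π_W‖ = |a| (operator norm), then |1 − a²| ≥ ⟨v_1∧…∧v_e, w_1∧…∧w_e⟩². -/

import Mathlib

open MeasureTheory Set ENNReal RealInnerProductSpace
noncomputable section

abbrev E (n : ℕ) := EuclideanSpace ℝ (Fin n)

def projL {n : ℕ} (V : Submodule ℝ (E n)) : E n →L[ℝ] E n :=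
  V.subtypeL.comp (V.orthogonalProjection)

/-! The Gram matrix `G = (⟪v i, w j⟫)` is, in the orthonormal bases `v` and `w`, the matrix of the
compression `P_W : V → W`, a contraction. Its squared singular values lie in `[0, 1]`, so their
product `det G ^ 2` is at most the smallest of them: `P_W` shrinks no vector of `V` by more than
the factor `|det G|`, and symmetrically for `P_V` on `W`. Splitting
`(P_V - P_W) x = P_V (x - P_W x) - (P_W x - P_V P_W x)` into two orthogonal pieces and bounding
each by Pythagoras gives `‖P_V - P_W‖ ^ 2 ≤ 1 - det G ^ 2`. -/

instance Submodule.finiteDimensional_span_range {K V ι : Type*} [DivisionRing K] [AddCommGroup V]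
    [Module K V] [Finite ι] (v : ι → V) : FiniteDimensional K (Submodule.span K (range v)) :=
  FiniteDimensional.span_of_finite K (finite_range v)

section SpanOrthonormalBasis

variable {𝕜 F ι : Type*} [RCLike 𝕜] [NormedAddCommGroup F] [InnerProductSpace 𝕜 F] [Fintype ι]
  {v : ι → F}

def Orthonormal.spanOrthonormalBasis (hv : Orthonormal 𝕜 v) :
    OrthonormalBasis ι 𝕜 (Submodule.span 𝕜 (range v)) :=
  (Module.Basis.span hv.linearIndependent).toOrthonormalBasis <| by
    simpa [Orthonormal, Module.Basis.span_apply] using hv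

@[simp]
theorem Orthonormal.coe_spanOrthonormalBasis (hv : Orthonormal 𝕜 v) (i : ι) :
    (hv.spanOrthonormalBasis i : F) = v i := by
  simp [Orthonormal.spanOrthonormalBasis, Module.Basis.span_apply]

end SpanOrthonormalBasis

namespace LinearMap

variable {U V : Type*} [NormedAddCommGroup U] [InnerProductSpace ℝ U] [FiniteDimensional ℝ U]
  [NormedAddCommGroup V] [InnerProductSpace ℝ V] [FiniteDimensional ℝ V]

theorem IsSymmetric.inner_apply_self_eq_sum_eigenvalues {T : U →ₗ[ℝ] U} (hT : T.IsSymmetric)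
    {n : ℕ} (hn : Module.finrank ℝ U = n) (x : U) :
    ⟪x, T x⟫ = ∑ i, hT.eigenvalues hn i * ⟪hT.eigenvectorBasis hn i, x⟫ ^ 2 := by
  rw [← (hT.eigenvectorBasis hn).sum_inner_mul_inner]
  refine Finset.sum_congr rfl fun i _ => ?_
  rw [← OrthonormalBasis.repr_apply_apply, hT.eigenvectorBasis_apply_self_apply,
    OrthonormalBasis.repr_apply_apply, real_inner_comm, RCLike.ofReal_real_eq_id, id_eq]
  ring

theorem IsSymmetric.eigenvalues_eq_inner {T : U →ₗ[ℝ] U} (hT : T.IsSymmetric)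
    {n : ℕ} (hn : Module.finrank ℝ U = n) (i : Fin n) :
    hT.eigenvalues hn i = ⟪hT.eigenvectorBasis hn i, T (hT.eigenvectorBasis hn i)⟫ := by
  rw [hT.apply_eigenvectorBasis, RCLike.ofReal_real_eq_id, id_eq, real_inner_smul_right,
    real_inner_self_eq_norm_sq, (hT.eigenvectorBasis hn).orthonormal.1 i]
  ring

theorem inner_adjoint_comp_self_apply (f : U →ₗ[ℝ] V) (x : U) :
    ⟪x, (f.adjoint ∘ₗ f) x⟫ = ‖f x‖ ^ 2 := by
  rw [comp_apply, adjoint_inner_right, real_inner_self_eq_norm_sq]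

theorem eigenvalues_adjoint_comp_self_mem_Icc {f : U →ₗ[ℝ] V} (hf : ∀ x, ‖f x‖ ≤ ‖x‖)
    (i : Fin (Module.finrank ℝ U)) :
    f.isPositive_adjoint_comp_self.isSymmetric.eigenvalues rfl i ∈ Icc 0 1 := by
  set hS := f.isPositive_adjoint_comp_self.isSymmetric
  set b := hS.eigenvectorBasis rfl
  rw [hS.eigenvalues_eq_inner, inner_adjoint_comp_self_apply]
  refine ⟨by positivity, ?_⟩
  calc ‖f (b i)‖ ^ 2 ≤ ‖b i‖ ^ 2 := by gcongr; exact hf _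
    _ = 1 := by rw [b.orthonormal.1 i, one_pow]

theorem normDet_sq_eq_prod_eigenvalues (f : U →ₗ[ℝ] V) :
    f.normDet ^ 2 = ∏ i, f.isPositive_adjoint_comp_self.isSymmetric.eigenvalues rfl i := by
  have := f.normDet_sq
  rw [f.isPositive_adjoint_comp_self.isSymmetric.det_eq_prod_eigenvalues rfl] at this
  simpa using this

theorem normDet_sq_le_one {f : U →ₗ[ℝ] V} (hf : ∀ x, ‖f x‖ ≤ ‖x‖) : f.normDet ^ 2 ≤ 1 := by
  rw [normDet_sq_eq_prod_eigenvalues]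
  exact Finset.prod_le_one (fun i _ => (eigenvalues_adjoint_comp_self_mem_Icc hf i).1)
    fun i _ => (eigenvalues_adjoint_comp_self_mem_Icc hf i).2

theorem normDet_sq_mul_norm_sq_le {f : U →ₗ[ℝ] V} (hf : ∀ x, ‖f x‖ ≤ ‖x‖) (x : U) :
    f.normDet ^ 2 * ‖x‖ ^ 2 ≤ ‖f x‖ ^ 2 := by
  set hS := f.isPositive_adjoint_comp_self.isSymmetric
  set b := hS.eigenvectorBasis rfl
  have hev := eigenvalues_adjoint_comp_self_mem_Icc hf
  have hdet_le : ∀ i, f.normDet ^ 2 ≤ hS.eigenvalues rfl i := fun i => by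
    rw [normDet_sq_eq_prod_eigenvalues, ← Finset.prod_singleton (hS.eigenvalues rfl) i]
    exact Finset.prod_le_prod_of_subset_of_le_one (Finset.subset_univ _)
      (fun j _ => (hev j).1) fun j _ _ => (hev j).2
  calc f.normDet ^ 2 * ‖x‖ ^ 2 = ∑ i, f.normDet ^ 2 * ⟪b i, x⟫ ^ 2 := by
        rw [← b.sum_sq_inner_right, Finset.mul_sum]
    _ ≤ ∑ i, hS.eigenvalues rfl i * ⟪b i, x⟫ ^ 2 := by gcongr with i; exact hdet_le i
    _ = ‖f x‖ ^ 2 := by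
        rw [← hS.inner_apply_self_eq_sum_eigenvalues, inner_adjoint_comp_self_apply]

end LinearMap

theorem ContinuousLinearMap.opNorm_sq_le_of_norm_apply_sq_le {𝕜 F G : Type*}
    [NontriviallyNormedField 𝕜] [SeminormedAddCommGroup F] [SeminormedAddCommGroup G]
    [NormedSpace 𝕜 F] [NormedSpace 𝕜 G] (f : F →L[𝕜] G) {c : ℝ} (hc : 0 ≤ c)
    (h : ∀ x, ‖f x‖ ^ 2 ≤ c * ‖x‖ ^ 2) : ‖f‖ ^ 2 ≤ c := by
  have hbound : ‖f‖ ≤ √c := f.opNorm_le_bound (Real.sqrt_nonneg c) fun x => by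
    rw [← Real.sqrt_sq (norm_nonneg (f x)), ← Real.sqrt_sq (norm_nonneg x), ← Real.sqrt_mul hc]
    exact Real.sqrt_le_sqrt (h x)
  calc ‖f‖ ^ 2 ≤ √c ^ 2 := by gcongr
    _ = c := Real.sq_sqrt hc

namespace Submodule

variable {F : Type*} [NormedAddCommGroup F] [InnerProductSpace ℝ F]

theorem norm_sq_eq_norm_starProjection_sq_add (K : Submodule ℝ F) [K.HasOrthogonalProjection]
    (x : F) : ‖x‖ ^ 2 = ‖K.starProjection x‖ ^ 2 + ‖x - K.starProjection x‖ ^ 2 := by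
  simpa using K.norm_sq_eq_add_norm_sq_starProjection x

theorem inner_starProjection_self_eq_norm_sq (K : Submodule ℝ F) [K.HasOrthogonalProjection]
    (x : F) : ⟪K.starProjection x, x⟫ = ‖K.starProjection x‖ ^ 2 := by
  simpa using K.re_inner_starProjection_eq_normSq x

theorem inner_starProjection_sub_starProjection_eq_zero (K : Submodule ℝ F)
    [K.HasOrthogonalProjection] (x y : F) : ⟪K.starProjection x, y - K.starProjection y⟫ = 0 := by
  rw [real_inner_comm]
  exact K.starProjection_inner_eq_zero y _ (K.starProjection_apply_mem x)

theorem norm_orthogonalProjectionOnto_comp_subtype_apply_le (L : Submodule ℝ F)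
    [L.HasOrthogonalProjection] {K : Submodule ℝ F} (x : K) :
    ‖(L.orthogonalProjectionOnto.toLinearMap ∘ₗ K.subtype) x‖ ≤ ‖x‖ :=
  L.norm_orthogonalProjectionOnto_apply_le x

theorem norm_sub_starProjection_sq_le (L : Submodule ℝ F) [L.HasOrthogonalProjection] {δ : ℝ}
    {z : F} (hz : δ * ‖z‖ ^ 2 ≤ ‖L.starProjection z‖ ^ 2) :
    ‖z - L.starProjection z‖ ^ 2 ≤ (1 - δ) * ‖z‖ ^ 2 := by
  linarith [L.norm_sq_eq_norm_starProjection_sq_add z]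

variable {K L : Submodule ℝ F} [K.HasOrthogonalProjection] [L.HasOrthogonalProjection] {δ : ℝ}

theorem norm_starProjection_sq_le_of_mem_orthogonal (hδ : δ ≤ 1)
    (hK : ∀ z ∈ K, δ * ‖z‖ ^ 2 ≤ ‖L.starProjection z‖ ^ 2) {y : F} (hy : y ∈ Lᗮ) :
    ‖K.starProjection y‖ ^ 2 ≤ (1 - δ) * ‖y‖ ^ 2 := by
  set z := K.starProjection y
  -- as `y ⊥ L`, only the component `z - P_L z` of `z` pairs with `y`, and it is short
  have hzy : ‖z‖ ^ 2 ≤ ‖z - L.starProjection z‖ * ‖y‖ := by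
    rw [← inner_starProjection_self_eq_norm_sq, ← sub_zero ⟪z, y⟫,
      ← inner_right_of_mem_orthogonal (L.starProjection_apply_mem z) hy, ← inner_sub_left]
    exact real_inner_le_norm _ _
  have hsub := L.norm_sub_starProjection_sq_le (hK z (K.starProjection_apply_mem y))
  have hsq : ‖z‖ ^ 2 * ‖z‖ ^ 2 ≤ (1 - δ) * ‖z‖ ^ 2 * ‖y‖ ^ 2 :=
    calc ‖z‖ ^ 2 * ‖z‖ ^ 2 ≤ (‖z - L.starProjection z‖ * ‖y‖) ^ 2 := by rw [← sq]; gcongr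
      _ ≤ (1 - δ) * ‖z‖ ^ 2 * ‖y‖ ^ 2 := by rw [mul_pow]; gcongr
  rcases (sq_nonneg ‖z‖).eq_or_lt with h0 | hpos
  · rw [← h0]; nlinarith [sq_nonneg ‖y‖]
  · nlinarith

theorem norm_starProjection_sub_starProjection_apply_sq_le (hδ : δ ≤ 1)
    (hK : ∀ z ∈ K, δ * ‖z‖ ^ 2 ≤ ‖L.starProjection z‖ ^ 2)
    (hL : ∀ z ∈ L, δ * ‖z‖ ^ 2 ≤ ‖K.starProjection z‖ ^ 2) (x : F) :
    ‖(K.starProjection - L.starProjection) x‖ ^ 2 ≤ (1 - δ) * ‖x‖ ^ 2 := by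
  set y := L.starProjection x
  have hdecomp : (K.starProjection - L.starProjection) x =
      K.starProjection (x - y) - (y - K.starProjection y) := by
    rw [sub_apply, map_sub]; abel
  have horth := K.inner_starProjection_sub_starProjection_eq_zero (x - y) y
  have h₁ := norm_starProjection_sq_le_of_mem_orthogonal hδ hK (L.sub_starProjection_mem_orthogonal x)
  have h₂ := K.norm_sub_starProjection_sq_le (hL y (L.starProjection_apply_mem x))
  calc ‖(K.starProjection - L.starProjection) x‖ ^ 2
      = ‖K.starProjection (x - y)‖ ^ 2 + ‖y - K.starProjection y‖ ^ 2 := by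
        rw [hdecomp, norm_sub_sq_real, horth]; ring
    _ ≤ (1 - δ) * ‖x - y‖ ^ 2 + (1 - δ) * ‖y‖ ^ 2 := add_le_add h₁ h₂
    _ = (1 - δ) * ‖x‖ ^ 2 := by rw [L.norm_sq_eq_norm_starProjection_sq_add x]; ring

end Submodule

section GramDeterminant

open Submodule

variable {F ι : Type*} [NormedAddCommGroup F] [InnerProductSpace ℝ F] [Fintype ι] [DecidableEq ι]
  {v w : ι → F}

theorem normDet_orthogonalProjectionOnto_comp_subtype (hv : Orthonormal ℝ v)
    (hw : Orthonormal ℝ w) :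
    ((span ℝ (range w)).orthogonalProjectionOnto.toLinearMap ∘ₗ (span ℝ (range v)).subtype).normDet
      = |(Matrix.of fun i j => ⟪v i, w j⟫).det| := by
  rw [LinearMap.normDet_eq_norm_det_toMatrix _ hv.spanOrthonormalBasis hw.spanOrthonormalBasis,
    Real.norm_eq_abs, ← Matrix.det_transpose]
  congr 3
  ext i j
  rw [LinearMap.toMatrix_apply]
  simp only [OrthonormalBasis.coe_toBasis_repr_apply, OrthonormalBasis.repr_apply_apply,
    OrthonormalBasis.coe_toBasis, LinearMap.comp_apply, Submodule.subtype_apply,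
    ContinuousLinearMap.coe_coe, inner_orthogonalProjectionOnto_eq_of_mem_left,
    Orthonormal.coe_spanOrthonormalBasis, real_inner_comm]

theorem det_inner_sq_le_one (hv : Orthonormal ℝ v) (hw : Orthonormal ℝ w) :
    (Matrix.of fun i j => ⟪v i, w j⟫).det ^ 2 ≤ 1 := by
  rw [← sq_abs, ← normDet_orthogonalProjectionOnto_comp_subtype hv hw]
  exact LinearMap.normDet_sq_le_one ((span ℝ (range w)).norm_orthogonalProjectionOnto_comp_subtype_apply_le)

theorem det_inner_sq_mul_norm_sq_le (hv : Orthonormal ℝ v) (hw : Orthonormal ℝ w) {z : F}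
    (hz : z ∈ span ℝ (range v)) :
    (Matrix.of fun i j => ⟪v i, w j⟫).det ^ 2 * ‖z‖ ^ 2
      ≤ ‖(span ℝ (range w)).starProjection z‖ ^ 2 := by
  rw [← sq_abs, ← normDet_orthogonalProjectionOnto_comp_subtype hv hw]
  exact LinearMap.normDet_sq_mul_norm_sq_le
    ((span ℝ (range w)).norm_orthogonalProjectionOnto_comp_subtype_apply_le)
    ⟨z, hz⟩

theorem det_inner_comm (v w : ι → F) :
    (Matrix.of fun i j => ⟪w i, v j⟫).det = (Matrix.of fun i j => ⟪v i, w j⟫).det := by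
  rw [← Matrix.det_transpose]
  congr 1
  ext i j
  exact real_inner_comm _ _

end GramDeterminant

theorem projL_eq_starProjection {n : ℕ} (V : Submodule ℝ (E n)) : projL V = V.starProjection :=
  rfl

theorem stmt4 (n e : ℕ) (V W : Submodule ℝ (E n))
    (v w : Fin e → E n) (hv : Orthonormal ℝ v) (hw : Orthonormal ℝ w)
    (hvV : Submodule.span ℝ (Set.range v) = V)
    (hwW : Submodule.span ℝ (Set.range w) = W)
    (a : ℝ) (ha : ‖projL V - projL W‖ = |a|) :
    |1 - a ^ 2| ≥ (Matrix.det (Matrix.of fun i j => ⟪v i, w j⟫)) ^ 2 := by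
  subst hvV hwW
  rw [projL_eq_starProjection, projL_eq_starProjection] at ha
  have hd := det_inner_sq_le_one hv hw
  have hnorm := ContinuousLinearMap.opNorm_sq_le_of_norm_apply_sq_le _ (sub_nonneg.2 hd)
    (Submodule.norm_starProjection_sub_starProjection_apply_sq_le hd
      (fun _ => det_inner_sq_mul_norm_sq_le hv hw)
      (fun _ => det_inner_comm v w ▸ det_inner_sq_mul_norm_sq_le hw hv))
  rw [ha, sq_abs] at hnorm
  linarith [le_abs_self (1 - a ^ 2)]
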